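/- arXiv:2204.07822 — 3 statements merged into one kernel-verified Lean document; each statement's English description precedes it below -/
import Mathlib

section
/- Define for each point x_k ∈ ℝ³ the affine function h_k^+(ζ) = x_k^3 + (x_k^1 - i x_k^2) ζ. Then for distinct points x_i, x_j with z_i ≠ z_j, one has h_i^+(a_{ij}) - h_j^+(a_{ij}) = -r_{ij}. -/
open Complex

theorem hplus_difference_at_double_point
    (xi1 xi2 xi3 xj1 xj2 xj3 : ℝ)
    (zi zj : ℂ) (hzi : zi = ⟨xi1, xi2⟩) (hzj : zj = ⟨xj1, xj2⟩)
    (hz : zi ≠ zj)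
    (r : ℝ) (hr : r = Real.sqrt ((xi1 - xj1)^2 + (xi2 - xj2)^2 + (xi3 - xj3)^2))
    (aij : ℂ)
    (haij : aij = ((xi3 : ℂ) - xj3 + r) / (((xj1 : ℂ) - xi1) - Complex.I * ((xj2 : ℂ) - xi2)))
    (hi hj : ℂ → ℂ)
    (hhi : ∀ ζ, hi ζ = (xi3 : ℂ) + ((xi1 : ℂ) - Complex.I * xi2) * ζ)
    (hhj : ∀ ζ, hj ζ = (xj3 : ℂ) + ((xj1 : ℂ) - Complex.I * xj2) * ζ) :
    hi aij - hj aij = -(r : ℂ) := by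
  have hd : (((xj1 : ℂ) - xi1) - Complex.I * ((xj2 : ℂ) - xi2)) ≠ 0 := by
    intro h
    apply hz
    have hre := congrArg Complex.re h
    have him := congrArg Complex.im h
    simp [Complex.ext_iff] at hre him
    rw [hzi, hzj]
    exact Complex.ext (by simp; linarith) (by simp; linarith)
  rw [hhi, hhj, haij]
  field_simp
  ring
end

section
/- Let c > 0 and define on (0, ∞) the 2×2 antihermitian matrix functions T₁(s) = (c/(2 sinh(cs))) · i[[0,1],[1,0]], T₂(s) = (c/(2 sinh(cs))) · i[[0,-i],[i,0]], T₃(s) = (c/(2 tanh(cs))) · i[[1,0],[0,-1]]. Then (T₁, T₂, T₃) satisfies Nahm's equations dT₁/ds = [T₂, T₃], dT₂/ds = [T₃, T₁], dT₃/ds = [T₁, T₂] on (0, ∞). -/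
open Matrix Complex

/-!
Each `Tₖ` is a real scalar multiple `fₖ • eₖ` of `eₖ = i σₖ`, and `[e₂, e₃] = -2 e₁` cyclically,
so Nahm's equations reduce to the Euler-top system `f₁' = -2 f₂ f₃` (cyclically) for the
coefficients. With `f₁ = f₂ = c / (2 sinh (c s))` and `f₃ = c / (2 tanh (c s))` this is
`(1 / sinh)' = -cosh / sinh²` and `(cosh / sinh)' = -1 / sinh²`, the latter by `cosh² - sinh² = 1`.
-/

theorem pauli_commutator₂₃ :
    (I • !![0, -I; I, 0]) * (I • !![1, 0; 0, -1]) - (I • !![1, 0; 0, -1]) * (I • !![0, -I; I, 0])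
      = (-2 : ℂ) • (I • !![0, 1; 1, 0]) := by
  ext i j; fin_cases i <;> fin_cases j <;> simp <;> ring

theorem pauli_commutator₃₁ :
    (I • !![1, 0; 0, -1]) * (I • !![0, 1; 1, 0]) - (I • !![0, 1; 1, 0]) * (I • !![1, 0; 0, -1])
      = (-2 : ℂ) • (I • !![0, -I; I, 0]) := by
  ext i j; fin_cases i <;> fin_cases j <;> simp <;> ring

theorem pauli_commutator₁₂ :
    (I • !![0, 1; 1, 0]) * (I • !![0, -I; I, 0]) - (I • !![0, -I; I, 0]) * (I • !![0, 1; 1, 0])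
      = (-2 : ℂ) • (I • !![1, 0; 0, -1]) := by
  ext i j; fin_cases i <;> fin_cases j <;> simp <;> ring

theorem Matrix.smul_mul_smul_sub_smul_mul_smul {n R : Type*} [Fintype n] [CommRing R]
    (a b : R) (A B : Matrix n n R) :
    (a • A) * (b • B) - (b • B) * (a • A) = (a * b) • (A * B - B * A) := by
  rw [smul_mul_smul_comm, smul_mul_smul_comm, mul_comm b a, smul_sub]

theorem HasDerivAt.ofReal_smul_apply {m n : Type*} {f : ℝ → ℝ} {f' s : ℝ}
    (hf : HasDerivAt f f' s) (A : Matrix m n ℂ) (i : m) (j : n) :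
    HasDerivAt (fun t => ((f t : ℂ) • A) i j) (((f' : ℂ) • A) i j) s := by
  simpa only [Matrix.smul_apply, smul_eq_mul] using hf.ofReal_comp.mul_const (A i j)

theorem hasDerivAt_div_two_mul_sinh {c s : ℝ} (hcs : c * s ≠ 0) :
    HasDerivAt (fun t => c / (2 * Real.sinh (c * t)))
      (-2 * (c / (2 * Real.sinh (c * s)) * (c / (2 * Real.tanh (c * s))))) s := by
  have hsinh : Real.sinh (c * s) ≠ 0 := Real.sinh_ne_zero.mpr hcs
  have hlin : HasDerivAt (fun t => c * t) c s := hasDerivAt_const_mul c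
  have hden := hlin.sinh.const_mul 2
  refine ((hasDerivAt_const s c).div hden (mul_ne_zero two_ne_zero hsinh)).congr_deriv ?_
  rw [Real.tanh_eq_sinh_div_cosh]
  field_simp
  ring

theorem hasDerivAt_div_two_mul_tanh {c s : ℝ} (hcs : c * s ≠ 0) :
    HasDerivAt (fun t => c / (2 * Real.tanh (c * t)))
      (-2 * (c / (2 * Real.sinh (c * s)) * (c / (2 * Real.sinh (c * s))))) s := by
  have hsinh : Real.sinh (c * s) ≠ 0 := Real.sinh_ne_zero.mpr hcs
  have hfun : (fun t => c / (2 * Real.tanh (c * t)))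
      = fun t => c * Real.cosh (c * t) / (2 * Real.sinh (c * t)) := by
    funext t
    rw [Real.tanh_eq_sinh_div_cosh, ← mul_div_assoc, div_div_eq_mul_div]
  have hlin : HasDerivAt (fun t => c * t) c s := hasDerivAt_const_mul c
  have hnum := hlin.cosh.const_mul c
  have hden := hlin.sinh.const_mul 2
  rw [hfun]
  refine (hnum.div hden (mul_ne_zero two_ne_zero hsinh)).congr_deriv ?_
  field_simp
  linear_combination -c ^ 2 * Real.cosh_sq_sub_sinh_sq (c * s)

theorem nahm_of_euler_top {n : Type*} [Fintype n] {E₁ E₂ E₃ : Matrix n n ℂ}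
    (hE₁ : E₂ * E₃ - E₃ * E₂ = (-2 : ℂ) • E₁) (hE₂ : E₃ * E₁ - E₁ * E₃ = (-2 : ℂ) • E₂)
    (hE₃ : E₁ * E₂ - E₂ * E₁ = (-2 : ℂ) • E₃) {f₁ f₂ f₃ : ℝ → ℝ} {T₁ T₂ T₃ : ℝ → Matrix n n ℂ}
    (hT₁ : ∀ t, T₁ t = (f₁ t : ℂ) • E₁) (hT₂ : ∀ t, T₂ t = (f₂ t : ℂ) • E₂)
    (hT₃ : ∀ t, T₃ t = (f₃ t : ℂ) • E₃) {s : ℝ}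
    (hf₁ : HasDerivAt f₁ (-2 * (f₂ s * f₃ s)) s) (hf₂ : HasDerivAt f₂ (-2 * (f₃ s * f₁ s)) s)
    (hf₃ : HasDerivAt f₃ (-2 * (f₁ s * f₂ s)) s) (i j : n) :
    HasDerivAt (fun t => T₁ t i j) ((T₂ s * T₃ s - T₃ s * T₂ s) i j) s ∧
      HasDerivAt (fun t => T₂ t i j) ((T₃ s * T₁ s - T₁ s * T₃ s) i j) s ∧
      HasDerivAt (fun t => T₃ t i j) ((T₁ s * T₂ s - T₂ s * T₁ s) i j) s := by
  simp only [hT₁, hT₂, hT₃, smul_mul_smul_sub_smul_mul_smul, hE₁, hE₂, hE₃, smul_smul]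
  refine ⟨(hf₁.ofReal_smul_apply E₁ i j).congr_deriv ?_,
    (hf₂.ofReal_smul_apply E₂ i j).congr_deriv ?_, (hf₃.ofReal_smul_apply E₃ i j).congr_deriv ?_⟩ <;>
  · push_cast
    ring_nf

/-- The exact rank-2 Nahm solution for two Dirac monopoles at `(0,0,±c/2)`. -/
theorem n2_hyperbolic_nahm_solution (c : ℝ) (hc : 0 < c)
    (T₁ T₂ T₃ : ℝ → Matrix (Fin 2) (Fin 2) ℂ)
    (hT₁ : ∀ s, T₁ s = ((c / (2 * Real.sinh (c * s)) : ℝ) : ℂ) • (Complex.I • !![0, 1; 1, 0]))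
    (hT₂ : ∀ s, T₂ s = ((c / (2 * Real.sinh (c * s)) : ℝ) : ℂ) •
      (Complex.I • !![0, -Complex.I; Complex.I, 0]))
    (hT₃ : ∀ s, T₃ s = ((c / (2 * Real.tanh (c * s)) : ℝ) : ℂ) • (Complex.I • !![1, 0; 0, -1])) :
    ∀ s : ℝ, 0 < s → ∀ i j : Fin 2,
      HasDerivAt (fun t => T₁ t i j) ((T₂ s * T₃ s - T₃ s * T₂ s) i j) s ∧
      HasDerivAt (fun t => T₂ t i j) ((T₃ s * T₁ s - T₁ s * T₃ s) i j) s ∧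
      HasDerivAt (fun t => T₃ t i j) ((T₁ s * T₂ s - T₂ s * T₁ s) i j) s := by
  intro s hs i j
  have hcs : c * s ≠ 0 := (mul_pos hc hs).ne'
  have hf := hasDerivAt_div_two_mul_sinh hcs
  exact nahm_of_euler_top pauli_commutator₂₃ pauli_commutator₃₁ pauli_commutator₁₂ hT₁ hT₂ hT₃
    hf (by convert hf using 2; ring) (hasDerivAt_div_two_mul_tanh hcs) i j
end

section
/- Fix distinct a₁₂, a₂₁ ∈ ℂ with a₂₁ ≠ 0, r > 0, and s > 0 with a₂₁ e^{2sr} ≠ a₁₂. Define Q₁(ζ) = ζ - a₁₂ + a₁₂(a₂₁ - a₁₂)/(a₂₁ e^{2sr} - a₁₂) and Q₂(ζ) = ζ(a₂₁ - a₁₂)/(a₂₁ e^{sr} - a₁₂ e^{-sr}). Then Q₁ is monic of degree 1, Q₂(0) = 0, and the matching conditions Q₁(a₁₂) = e^{-sr} Q₂(a₁₂) and Q₂(a₂₁) = e^{-sr} Q₁(a₂₁) hold. -/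
open Complex

/-!
Write `e = exp (s r)`. The denominator of `Q₂` is `a₂₁ e - a₁₂ e⁻¹ = (a₂₁ e² - a₁₂) / e`, a rescaling
of the denominator of `Q₁`; after this substitution both matching conditions are identities of
rational functions in `a₁₂, a₂₁, e`.
-/

section Matching

variable {K : Type*} [Field K] {a b e : K}

theorem mul_sub_mul_inv_eq_div (he : e ≠ 0) : b * e - a * e⁻¹ = (b * e ^ 2 - a) / e := by
  field_simp

theorem matching_at_left (he : e ≠ 0) (hD : b * e ^ 2 ≠ a) :
    a - a + a * (b - a) / (b * e ^ 2 - a) = e⁻¹ * (a * (b - a) / (b * e - a * e⁻¹)) := by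
  have hD' : b * e ^ 2 - a ≠ 0 := sub_ne_zero.mpr hD
  rw [mul_sub_mul_inv_eq_div he]
  field_simp
  ring

theorem matching_at_right (he : e ≠ 0) (hD : b * e ^ 2 ≠ a) :
    b * (b - a) / (b * e - a * e⁻¹) = e⁻¹ * (b - a + a * (b - a) / (b * e ^ 2 - a)) := by
  have hD' : b * e ^ 2 - a ≠ 0 := sub_ne_zero.mpr hD
  rw [mul_sub_mul_inv_eq_div he]
  field_simp
  ring

end Matching

theorem n2_first_basis_element_general (a12 a21 : ℂ)
    (r s : ℝ)
    (hden : a21 * Real.exp (2 * s * r) ≠ a12)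
    (Q₁ Q₂ : ℂ → ℂ)
    (hQ₁ : ∀ ζ, Q₁ ζ = ζ - a12 + a12 * (a21 - a12) / (a21 * Real.exp (2 * s * r) - a12))
    (hQ₂ : ∀ ζ, Q₂ ζ = ζ * (a21 - a12) /
      (a21 * Real.exp (s * r) - a12 * Real.exp (-(s * r)))) :
    (∃ b : ℂ, ∀ ζ, Q₁ ζ = ζ + b) ∧
    Q₂ 0 = 0 ∧
    Q₁ a12 = Real.exp (-(s * r)) * Q₂ a12 ∧
    Q₂ a21 = Real.exp (-(s * r)) * Q₁ a21 := by
  have hsq : (Real.exp (2 * s * r) : ℂ) = (Real.exp (s * r) : ℂ) ^ 2 := by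
    rw [← ofReal_pow, ← Real.exp_nat_mul]
    ring_nf
  have hneg : (Real.exp (-(s * r)) : ℂ) = (Real.exp (s * r) : ℂ)⁻¹ := by
    rw [Real.exp_neg, ofReal_inv]
  have he : (Real.exp (s * r) : ℂ) ≠ 0 := ofReal_ne_zero.mpr (Real.exp_pos _).ne'
  rw [hsq] at hden
  refine ⟨⟨-a12 + a12 * (a21 - a12) / (a21 * Real.exp (2 * s * r) - a12),
    fun ζ => by rw [hQ₁]; ring⟩, by simp [hQ₂], ?_, ?_⟩
  · rw [hQ₁, hQ₂, hsq, hneg]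
    exact matching_at_left he hden
  · rw [hQ₁, hQ₂, hsq, hneg]
    exact matching_at_right he hden

theorem n2_first_basis_element (a12 a21 : ℂ) (hne : a12 ≠ a21) (ha21 : a21 ≠ 0)
    (r s : ℝ) (hr : 0 < r) (hs : 0 < s)
    (hden : a21 * Real.exp (2 * s * r) ≠ a12)
    (Q₁ Q₂ : ℂ → ℂ)
    (hQ₁ : ∀ ζ, Q₁ ζ = ζ - a12 + a12 * (a21 - a12) / (a21 * Real.exp (2 * s * r) - a12))
    (hQ₂ : ∀ ζ, Q₂ ζ = ζ * (a21 - a12) /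
      (a21 * Real.exp (s * r) - a12 * Real.exp (-(s * r)))) :
    (∃ b : ℂ, ∀ ζ, Q₁ ζ = ζ + b) ∧
    Q₂ 0 = 0 ∧
    Q₁ a12 = Real.exp (-(s * r)) * Q₂ a12 ∧
    Q₂ a21 = Real.exp (-(s * r)) * Q₁ a21 :=
  n2_first_basis_element_general a12 a21 r s hden Q₁ Q₂ hQ₁ hQ₂
end
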